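/- arXiv:0804.0050 — 6 statements merged into one kernel-verified Lean document; each statement's English description precedes it below -/
import Mathlib

section
/- For an integer Q ≥ 2 and ρ ≥ 0, let X be uniformly distributed on the Q-ary PPM alphabet {e_1, …, e_Q} ⊂ ℝ^Q (the standard basis vectors), let Z = (Z_1, …, Z_Q) be a standard Gaussian vector in ℝ^Q independent of X, and let Y = √ρ·X + Z. Define the estimator s(y) ∈ ℝ^Q by s(y)_i = exp(√ρ·y_i) / Σ_{k=1}^{Q} exp(√ρ·y_k). Then the mean-square error of s satisfies E[‖X − s(Y)‖²] = 1 − E[ (exp(2√ρ(√ρ + Z_1)) + (Q−1)·exp(2√ρ·Z_2)) / (exp(ρ + √ρ·Z_1) + Σ_{k=2}^{Q} exp(√ρ·Z_k))² ], where Z_1, …, Z_Q are i.i.d. standard Gaussian random variables. -/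
open MeasureTheory ProbabilityTheory Real Filter
open scoped ProbabilityTheory ENNReal

/-!
Given `X = e_q`, the output `Y = Z + √ρ e_q` is a standard Gaussian shifted along a coordinate
axis, whose law has density `L_q(z) = exp (√ρ z_q - ρ / 2)` with respect to the standard Gaussian
(Cameron–Martin). As `s(y)_q = L_q(y) / ∑ₖ L_k(y)`, this gives `E[g(X, Y)] = E[∑ₖ s(Y)_k g(e_k, Y)]`
for bounded `g`: `s(Y)` is the posterior law of `X`. For `g(x, y) = ‖x - s(y)‖²` the right-hand
integrand is `∑ₖ p_k ‖e_k - p‖² = 1 - ‖p‖²` with `p = s(Y)`, so the error is `1 - E‖s(Y)‖²`.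
Finally the standard Gaussian is invariant under permutations of the coordinates, so one may
condition on `X = e_1` and replace each `s_i(Y)²`, `i ≠ 1`, by `s_2(Y)²` in the expectation.
-/

/-- The conditional-mean (soft) estimator for `Q`-ary PPM on the AWGN channel at SNR `ρ`:
`s(y) i = exp(√ρ · y i) / ∑ k exp(√ρ · y k)`. -/
noncomputable def ppmEstimator (Q : ℕ) (ρ : ℝ) (y : Fin Q → ℝ) (i : Fin Q) : ℝ :=
  Real.exp (Real.sqrt ρ * y i) / ∑ k, Real.exp (Real.sqrt ρ * y k)

namespace MeasureTheory

theorem Measure.pi_withDensity_comp_eval {ι α : Type*} [Fintype ι] [DecidableEq ι]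
    [MeasurableSpace α] (μ : ι → Measure α) [∀ j, SigmaFinite (μ j)] (i : ι)
    {h : α → ℝ≥0∞} (hh : Measurable h) [SigmaFinite ((μ i).withDensity h)] :
    (Measure.pi μ).withDensity (fun x => h (x i)) =
      Measure.pi fun j => if j = i then (μ i).withDensity h else μ j := by
  have : ∀ j, SigmaFinite (if j = i then (μ i).withDensity h else μ j) := fun j => by
    split_ifs <;> infer_instance
  refine (pi_eq fun s hs => ?_).symm
  rw [withDensity_apply _ (MeasurableSet.univ_pi hs), restrict_pi_pi,
    ← lintegral_map hh (measurable_pi_apply i), pi_map_eval, lintegral_smul_measure,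
    ← withDensity_apply _ (hs i), ← Finset.prod_erase_mul _ _ (Finset.mem_univ i), if_pos rfl]
  congr 1
  refine Finset.prod_congr rfl fun j hj => ?_
  rw [if_neg (Finset.ne_of_mem_erase hj), restrict_apply_univ]

theorem integral_comp_perm_pi {ι α E : Type*} [Fintype ι] [MeasurableSpace α]
    [NormedAddCommGroup E] [NormedSpace ℝ E] (μ : Measure α) [SigmaFinite μ]
    (σ : Equiv.Perm ι) (f : (ι → α) → E) :
    ∫ z, f (z ∘ σ) ∂(Measure.pi fun _ => μ) = ∫ z, f z ∂(Measure.pi fun _ => μ) :=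
  (measurePreserving_arrowCongr' (fun _ => μ) (fun _ => μ) σ.symm (MeasurableEquiv.refl α)
    fun _ => MeasurePreserving.id μ).integral_comp' f

end MeasureTheory

namespace ProbabilityTheory

theorem gaussianReal_eq_withDensity_exp (a : ℝ) :
    gaussianReal a 1 =
      (gaussianReal 0 1).withDensity fun x => ENNReal.ofReal (exp (a * x - a ^ 2 / 2)) := by
  rw [gaussianReal_of_var_ne_zero 0 one_ne_zero, gaussianReal_of_var_ne_zero a one_ne_zero,
    ← withDensity_mul _ (measurable_gaussianPDF _ _) (by fun_prop)]
  congr 1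
  ext x
  rw [gaussianPDF_def, gaussianPDF_def, Pi.mul_apply,
    ← ENNReal.ofReal_mul (gaussianPDFReal_nonneg _ _ _)]
  simp only [gaussianPDFReal]
  rw [mul_assoc _ (exp _), ← exp_add]
  congr 3
  push_cast
  ring_nf

section StandardGaussianPi

variable {ι E : Type*} [Fintype ι] [DecidableEq ι] [NormedAddCommGroup E] [NormedSpace ℝ E]

theorem map_add_single_pi_gaussianReal (i : ι) (a : ℝ) :
    (Measure.pi fun _ : ι => gaussianReal 0 1).map (· + Pi.single i a) =
      (Measure.pi fun _ : ι => gaussianReal 0 1).withDensity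
        fun z => ENNReal.ofReal (exp (a * z i - a ^ 2 / 2)) := by
  have htilt := gaussianReal_eq_withDensity_exp a
  have : SigmaFinite ((gaussianReal 0 1).withDensity
      fun x => ENNReal.ofReal (exp (a * x - a ^ 2 / 2))) := by
    rw [← htilt]; infer_instance
  rw [Measure.pi_withDensity_comp_eval _ i (h := fun x => ENNReal.ofReal (exp (a * x - a ^ 2 / 2)))
    (by fun_prop), ← htilt]
  have hshift : ∀ j, (gaussianReal 0 1).map (· + (Pi.single i a : ι → ℝ) j) =
      if j = i then gaussianReal a 1 else gaussianReal 0 1 := fun j => by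
    rw [gaussianReal_map_add_const, zero_add, Pi.single_apply]
    split_ifs <;> rfl
  simp_rw [← hshift]
  exact Measure.pi_map_pi (fun j => (measurable_add_const _).aemeasurable)

theorem integral_add_single_pi_gaussianReal (i : ι) (a : ℝ) (f : (ι → ℝ) → E) :
    ∫ z, f (z + Pi.single i a) ∂(Measure.pi fun _ : ι => gaussianReal 0 1) =
      ∫ z, exp (a * z i - a ^ 2 / 2) • f z ∂(Measure.pi fun _ : ι => gaussianReal 0 1) := by
  have h := (MeasurableEquiv.addRight (Pi.single i a : ι → ℝ)).measurableEmbedding.integral_map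
    (μ := Measure.pi fun _ : ι => gaussianReal 0 1) f
  rw [MeasurableEquiv.coe_addRight, map_add_single_pi_gaussianReal] at h
  rw [← h, integral_withDensity_eq_integral_toReal_smul (by fun_prop)
      (ae_of_all _ fun _ => ENNReal.ofReal_lt_top)]
  simp_rw [ENNReal.toReal_ofReal (exp_pos _).le]

theorem integrable_add_single_pi_gaussianReal_iff (i : ι) (a : ℝ) {f : (ι → ℝ) → E} :
    Integrable (fun z => f (z + Pi.single i a)) (Measure.pi fun _ : ι => gaussianReal 0 1) ↔
      Integrable (fun z => exp (a * z i - a ^ 2 / 2) • f z)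
        (Measure.pi fun _ : ι => gaussianReal 0 1) := by
  have h := integrable_map_equiv (μ := Measure.pi fun _ : ι => gaussianReal 0 1)
    (MeasurableEquiv.addRight (Pi.single i a : ι → ℝ)) f
  rw [MeasurableEquiv.coe_addRight, map_add_single_pi_gaussianReal] at h
  rw [← Function.comp_def, ← h, integrable_withDensity_iff_integrable_smul' (by fun_prop)
      (ae_of_all _ fun _ => ENNReal.ofReal_lt_top)]
  simp_rw [ENNReal.toReal_ofReal (exp_pos _).le]

theorem sum_integral_add_single_pi_gaussianReal (a : ℝ) {h : ι → (ι → ℝ) → ℝ}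
    (hm : ∀ i, Measurable (h i)) {C : ℝ} (hC : ∀ i z, |h i z| ≤ C) :
    ∑ i, ∫ z, h i (z + Pi.single i a) ∂(Measure.pi fun _ : ι => gaussianReal 0 1) =
      ∫ z, ∑ i, exp (a * z i - a ^ 2 / 2) * h i z ∂(Measure.pi fun _ : ι => gaussianReal 0 1) := by
  have hint : ∀ i, Integrable (fun z => h i (z + Pi.single i a))
      (Measure.pi fun _ : ι => gaussianReal 0 1) := fun i =>
    .of_bound (((hm i).comp (measurable_add_const _)).aestronglyMeasurable) C
      (ae_of_all _ fun z => hC i _)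
  simp_rw [integral_add_single_pi_gaussianReal, ← smul_eq_mul]
  exact (integral_finsetSum _ fun i _ =>
    (integrable_add_single_pi_gaussianReal_iff i a).mp (hint i)).symm

end StandardGaussianPi

theorem IndepFun.integral_comp_of_map_eq_uniform {Ω α β : Type*} [MeasurableSpace Ω]
    [MeasurableSpace α] [MeasurableSpace β] {P : Measure Ω} [IsFiniteMeasure P]
    {X : Ω → α} {Z : Ω → β} (hXZ : IndepFun X Z P) (hX : Measurable X) (hZ : Measurable Z)
    {n : ℕ} {b : Fin n → α} (hXlaw : P.map X = (n : ℝ≥0∞)⁻¹ • ∑ q, Measure.dirac (b q))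
    {F : α × β → ℝ} (hF : Measurable F) (hFint : ∀ q, Integrable (fun z => F (b q, z)) (P.map Z)) :
    ∫ ω, F (X ω, Z ω) ∂P = (n : ℝ)⁻¹ * ∑ q, ∫ z, F (b q, z) ∂(P.map Z) := by
  have hmk : ∀ q, Measurable (Prod.mk (b q) : β → α × β) := fun _ => measurable_prodMk_left
  rw [← integral_map (hX.prodMk hZ).aemeasurable hF.aestronglyMeasurable,
    (indepFun_iff_map_prod_eq_prod_map_map hX.aemeasurable hZ.aemeasurable).mp hXZ, hXlaw,
    Measure.prod_smul_left, integral_smul_measure, ← Measure.sum_fintype, Measure.prod_sum_left,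
    Measure.sum_fintype, integral_finsetSum_measure, ENNReal.toReal_inv, ENNReal.toReal_natCast,
    smul_eq_mul]
  · simp_rw [Measure.dirac_prod, integral_map (hmk _).aemeasurable hF.aestronglyMeasurable]
  · intro q _
    rw [Measure.dirac_prod, integrable_map_measure hF.aestronglyMeasurable (hmk q).aemeasurable]
    exact hFint q

end ProbabilityTheory

theorem sum_single_sub_sq {ι : Type*} [Fintype ι] [DecidableEq ι] (p : ι → ℝ) (k : ι) :
    ∑ i, ((Pi.single k 1 : ι → ℝ) i - p i) ^ 2 = 1 - 2 * p k + ∑ i, p i ^ 2 := by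
  simp only [sub_sq, Finset.sum_add_distrib, Finset.sum_sub_distrib, Pi.single_apply]
  simp

theorem sum_mul_sum_single_sub_sq {ι : Type*} [Fintype ι] [DecidableEq ι] {p : ι → ℝ}
    (hp : ∑ i, p i = 1) :
    ∑ k, p k * ∑ i, ((Pi.single k 1 : ι → ℝ) i - p i) ^ 2 = 1 - ∑ i, p i ^ 2 := by
  simp_rw [sum_single_sub_sq, mul_add, mul_sub, Finset.sum_add_distrib, Finset.sum_sub_distrib,
    ← Finset.sum_mul, hp]
  rw [show ∑ k, p k * (2 * p k) = 2 * ∑ k, p k ^ 2 by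
    rw [Finset.mul_sum]; exact Finset.sum_congr rfl fun _ _ => by ring]
  ring

section PPM

variable {Q : ℕ} {ρ : ℝ}

local notation "γQ" => Measure.pi fun _ : Fin Q => gaussianReal 0 1

theorem ppmEstimator_nonneg (y : Fin Q → ℝ) (i : Fin Q) : 0 ≤ ppmEstimator Q ρ y i := by
  unfold ppmEstimator; positivity

theorem ppmEstimator_le_one (y : Fin Q → ℝ) (i : Fin Q) : ppmEstimator Q ρ y i ≤ 1 :=
  div_le_one_of_le₀ (Finset.single_le_sum (f := fun k => exp (√ρ * y k))
    (fun _ _ => (exp_pos _).le) (Finset.mem_univ i))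
    (Finset.sum_nonneg fun _ _ => (exp_pos _).le)

theorem abs_ppmEstimator_le_one (y : Fin Q → ℝ) (i : Fin Q) : |ppmEstimator Q ρ y i| ≤ 1 :=
  abs_le.mpr ⟨by linarith [ppmEstimator_nonneg (ρ := ρ) y i], ppmEstimator_le_one y i⟩

theorem sum_ppmEstimator [NeZero Q] (y : Fin Q → ℝ) : ∑ i, ppmEstimator Q ρ y i = 1 := by
  unfold ppmEstimator
  rw [← Finset.sum_div]
  exact div_self (Finset.sum_pos (fun _ _ => exp_pos _) Finset.univ_nonempty).ne'

@[fun_prop]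
theorem measurable_ppmEstimator (i : Fin Q) : Measurable fun y => ppmEstimator Q ρ y i := by
  unfold ppmEstimator; fun_prop

theorem ppmEstimator_comp_perm (y : Fin Q → ℝ) (σ : Equiv.Perm (Fin Q)) (i : Fin Q) :
    ppmEstimator Q ρ (y ∘ σ) i = ppmEstimator Q ρ y (σ i) := by
  unfold ppmEstimator
  simp only [Function.comp_apply]
  rw [Equiv.sum_comp σ fun k => exp (√ρ * y k)]

theorem sum_exp_mul_ppmEstimator (c : ℝ) (y : Fin Q → ℝ) (k : Fin Q) :
    (∑ q, exp (√ρ * y q - c)) * ppmEstimator Q ρ y k = exp (√ρ * y k - c) := by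
  have hpos : 0 < ∑ q, exp (√ρ * y q) :=
    Finset.sum_pos (fun _ _ => exp_pos _) ⟨k, Finset.mem_univ k⟩
  simp_rw [exp_sub, ← Finset.sum_div, ppmEstimator]
  field_simp

theorem sum_integral_ppm_eq_sum_integral_posterior {g : Fin Q → (Fin Q → ℝ) → ℝ}
    (hg : ∀ q, Measurable (g q)) {C : ℝ} (hC : ∀ q y, |g q y| ≤ C) :
    ∑ q, ∫ z, g q (z + Pi.single q √ρ) ∂γQ =
      ∑ q, ∫ z, ∑ k, ppmEstimator Q ρ (z + Pi.single q √ρ) k * g k (z + Pi.single q √ρ) ∂γQ := by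
  have hbound : ∀ (q : Fin Q) y, |∑ k, ppmEstimator Q ρ y k * g k y| ≤ ∑ _k : Fin Q, C :=
    fun _ y => (Finset.abs_sum_le_sum_abs _ _).trans <| Finset.sum_le_sum fun k _ => by
      rw [abs_mul]
      exact (mul_le_of_le_one_left (abs_nonneg _) (abs_ppmEstimator_le_one y k)).trans (hC k y)
  rw [sum_integral_add_single_pi_gaussianReal _ hg hC, sum_integral_add_single_pi_gaussianReal
    (h := fun _ y => ∑ k, ppmEstimator Q ρ y k * g k y) _ (fun _ => by fun_prop) hbound]
  congr 1
  funext z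
  simp_rw [Finset.mul_sum, ← mul_assoc]
  rw [Finset.sum_comm]
  simp_rw [← Finset.sum_mul, sum_exp_mul_ppmEstimator]

theorem abs_sum_single_sub_ppmEstimator_sq_le (q : Fin Q) (y : Fin Q → ℝ) :
    |∑ i, ((Pi.single q 1 : Fin Q → ℝ) i - ppmEstimator Q ρ y i) ^ 2| ≤ Q := by
  rw [abs_of_nonneg (Finset.sum_nonneg fun _ _ => sq_nonneg _)]
  refine (Finset.sum_le_sum fun i _ => ?_).trans_eq (by simp : ∑ _i : Fin Q, (1 : ℝ) = Q)
  have h0 := ppmEstimator_nonneg (ρ := ρ) y i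
  have h1 := ppmEstimator_le_one (ρ := ρ) y i
  rcases eq_or_ne i q with rfl | hiq
  · rw [Pi.single_eq_same]; nlinarith
  · rw [Pi.single_eq_of_ne hiq]; nlinarith

theorem sum_integral_ppm_sq_error [NeZero Q] :
    ∑ q, ∫ z, ∑ i,
        ((Pi.single q 1 : Fin Q → ℝ) i - ppmEstimator Q ρ (z + Pi.single q √ρ) i) ^ 2 ∂γQ =
      ∑ q, ∫ z, (1 - ∑ i, ppmEstimator Q ρ (z + Pi.single q √ρ) i ^ 2) ∂γQ := by
  rw [sum_integral_ppm_eq_sum_integral_posterior (fun _ => by fun_prop)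
    abs_sum_single_sub_ppmEstimator_sq_le]
  simp_rw [sum_mul_sum_single_sub_sq (sum_ppmEstimator _)]

theorem integral_comp_ppmEstimator_perm (F : (Fin Q → ℝ) → ℝ) (σ : Equiv.Perm (Fin Q))
    (q : Fin Q) :
    ∫ z, F (ppmEstimator Q ρ (z + Pi.single (σ q) √ρ) ∘ σ) ∂γQ =
      ∫ z, F (ppmEstimator Q ρ (z + Pi.single q √ρ)) ∂γQ := by
  have hcomp : ∀ z : Fin Q → ℝ, ppmEstimator Q ρ (z + Pi.single (σ q) √ρ) ∘ σ =
      ppmEstimator Q ρ (z ∘ σ + Pi.single q √ρ) := fun z => by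
    ext i
    rw [Function.comp_apply, ← ppmEstimator_comp_perm, Pi.add_comp, Pi.single_comp_equiv,
      Equiv.symm_apply_apply]
  simp_rw [hcomp]
  exact integral_comp_perm_pi (gaussianReal 0 1) σ
    fun z => F (ppmEstimator Q ρ (z + Pi.single q √ρ))

theorem integral_sum_sq_ppmEstimator_eq (q q' : Fin Q) :
    ∫ z, ∑ i, ppmEstimator Q ρ (z + Pi.single q √ρ) i ^ 2 ∂γQ =
      ∫ z, ∑ i, ppmEstimator Q ρ (z + Pi.single q' √ρ) i ^ 2 ∂γQ := by
  have h := integral_comp_ppmEstimator_perm (ρ := ρ) (fun p => ∑ i, p i ^ 2) (Equiv.swap q q') q'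
  have hF : ∀ p : Fin Q → ℝ, ∑ i, (p ∘ Equiv.swap q q') i ^ 2 = ∑ i, p i ^ 2 :=
    fun p => Equiv.sum_comp _ fun i => p i ^ 2
  simpa only [Equiv.swap_apply_right, hF] using h

theorem integral_sq_ppmEstimator_eq_of_ne {q i k : Fin Q} (hi : i ≠ q) (hk : k ≠ q) :
    ∫ z, ppmEstimator Q ρ (z + Pi.single q √ρ) i ^ 2 ∂γQ =
      ∫ z, ppmEstimator Q ρ (z + Pi.single q √ρ) k ^ 2 ∂γQ := by
  have h := integral_comp_ppmEstimator_perm (ρ := ρ) (fun p => p k ^ 2) (Equiv.swap i k) q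
  simpa only [Equiv.swap_apply_of_ne_of_ne hi.symm hk.symm, Function.comp_apply,
    Equiv.swap_apply_right] using h

theorem integrable_sq_ppmEstimator_shift (q i : Fin Q) :
    Integrable (fun z => ppmEstimator Q ρ (z + Pi.single q √ρ) i ^ 2) γQ :=
  .of_bound (Measurable.aestronglyMeasurable (by fun_prop)) 1 (ae_of_all _ fun _ => by
    rw [norm_pow, Real.norm_eq_abs]
    exact pow_le_one₀ (abs_nonneg _) (abs_ppmEstimator_le_one _ _))

theorem integral_sum_sq_ppmEstimator_eq_add {q q' : Fin Q} (hq' : q' ≠ q) :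
    ∫ z, ∑ i, ppmEstimator Q ρ (z + Pi.single q √ρ) i ^ 2 ∂γQ =
      ∫ z, (ppmEstimator Q ρ (z + Pi.single q √ρ) q ^ 2 +
        ((Q : ℝ) - 1) * ppmEstimator Q ρ (z + Pi.single q √ρ) q' ^ 2) ∂γQ := by
  have hint := integrable_sq_ppmEstimator_shift (ρ := ρ) q
  rw [integral_add (hint q) ((hint q').const_mul _), integral_const_mul,
    integral_finsetSum _ fun i _ => hint i, ← Finset.add_sum_erase _ _ (Finset.mem_univ q),
    Finset.sum_congr rfl fun i hi =>
      integral_sq_ppmEstimator_eq_of_ne (Finset.ne_of_mem_erase hi) hq',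
    Finset.sum_const, Finset.card_erase_of_mem (Finset.mem_univ q), Finset.card_univ,
    Fintype.card_fin, nsmul_eq_mul, Nat.cast_pred (Fin.pos q)]

theorem ppm_mmse_eq_one_sub [NeZero Q] (q₀ : Fin Q) :
    (Q : ℝ)⁻¹ * ∑ q, ∫ z, ∑ i,
        ((Pi.single q 1 : Fin Q → ℝ) i - ppmEstimator Q ρ (z + Pi.single q √ρ) i) ^ 2 ∂γQ =
      1 - ∫ z, ∑ i, ppmEstimator Q ρ (z + Pi.single q₀ √ρ) i ^ 2 ∂γQ := by
  rw [sum_integral_ppm_sq_error]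
  simp_rw [integral_sub (integrable_const 1)
      (integrable_finsetSum _ fun i _ => integrable_sq_ppmEstimator_shift _ i), integral_const, probReal_univ, one_smul,
    integral_sum_sq_ppmEstimator_eq _ q₀, Finset.sum_const, Finset.card_univ, Fintype.card_fin,
    nsmul_eq_mul, ← mul_assoc, inv_mul_cancel₀ (NeZero.ne (Q : ℝ)), one_mul]

theorem ppmEstimator_sq_add_mul_sq (hρ : 0 ≤ ρ) (z : Fin Q → ℝ) {q q' : Fin Q} (hq' : q' ≠ q) :
    ppmEstimator Q ρ (z + Pi.single q √ρ) q ^ 2 +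
        ((Q : ℝ) - 1) * ppmEstimator Q ρ (z + Pi.single q √ρ) q' ^ 2 =
      (exp (2 * √ρ * (√ρ + z q)) + ((Q : ℝ) - 1) * exp (2 * √ρ * z q')) /
        (exp (ρ + √ρ * z q) + ∑ k ∈ Finset.univ \ {q}, exp (√ρ * z k)) ^ 2 := by
  have hss : √ρ * √ρ = ρ := mul_self_sqrt hρ
  have hden : ∑ k, exp (√ρ * (z + Pi.single q √ρ : Fin Q → ℝ) k) =
      exp (ρ + √ρ * z q) + ∑ k ∈ Finset.univ \ {q}, exp (√ρ * z k) := by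
    rw [Finset.sum_eq_add_sum_sdiff_singleton_of_mem (Finset.mem_univ q)]
    refine congrArg₂ _ ?_ (Finset.sum_congr rfl fun k hk => ?_)
    · rw [Pi.add_apply, Pi.single_eq_same, mul_add, hss, add_comm]
    · rw [Pi.add_apply, Pi.single_eq_of_ne (Finset.notMem_singleton.mp (Finset.mem_sdiff.mp hk).2),
        add_zero]
  rw [ppmEstimator, ppmEstimator, hden, div_pow, div_pow, mul_div_assoc', ← add_div]
  simp only [← exp_nat_mul, Pi.add_apply, Pi.single_eq_same, Pi.single_eq_of_ne hq', add_zero]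
  push_cast
  ring_nf

end PPM

/-- The MMSE of `Q`-ary PPM on the AWGN channel at SNR `ρ`:
`E[‖X − s(Y)‖²] = 1 − E[(e^{2√ρ(√ρ+Z₁)} + (Q−1)e^{2√ρ Z₂}) / (e^{ρ+√ρ Z₁} + ∑_{k≥2} e^{√ρ Z_k})²]`. -/
theorem ppm_mmse_formula {Ω : Type*} [MeasureSpace Ω] [IsProbabilityMeasure (ℙ : Measure Ω)]
    (Q : ℕ) (hQ : 2 ≤ Q) (ρ : ℝ) (hρ : 0 ≤ ρ)
    (X Z : Ω → Fin Q → ℝ) (hXmeas : Measurable X) (hZmeas : Measurable Z)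
    (hXlaw : Measure.map X ℙ =
      ((Q : ℝ≥0∞))⁻¹ • ∑ q : Fin Q, Measure.dirac (fun i => if i = q then (1 : ℝ) else 0))
    (hZlaw : Measure.map Z ℙ = Measure.pi fun _ : Fin Q => gaussianReal 0 1)
    (hindep : IndepFun X Z ℙ)
    (Y : Ω → Fin Q → ℝ) (hY : ∀ ω i, Y ω i = Real.sqrt ρ * X ω i + Z ω i) :
    ∫ ω, ∑ i, (X ω i - ppmEstimator Q ρ (Y ω) i) ^ 2 ∂ℙ =
      1 - ∫ ω,
        (Real.exp (2 * Real.sqrt ρ * (Real.sqrt ρ + Z ω ⟨0, by omega⟩))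
            + ((Q : ℝ) - 1) * Real.exp (2 * Real.sqrt ρ * Z ω ⟨1, by omega⟩)) /
          (Real.exp (ρ + Real.sqrt ρ * Z ω ⟨0, by omega⟩)
            + ∑ k ∈ Finset.univ \ {(⟨0, by omega⟩ : Fin Q)},
                Real.exp (Real.sqrt ρ * Z ω k)) ^ 2 ∂ℙ := by
  have : NeZero Q := ⟨by omega⟩
  have h10 : (⟨1, by omega⟩ : Fin Q) ≠ ⟨0, by omega⟩ := by simp [Fin.ext_iff]
  have hXlaw' :
      Measure.map X ℙ = (Q : ℝ≥0∞)⁻¹ • ∑ q, Measure.dirac (Pi.single q 1 : Fin Q → ℝ) := by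
    simpa only [← Pi.single_apply] using hXlaw
  have hYZ : Y = fun ω => Z ω + √ρ • X ω := funext fun ω => funext fun i => by
    rw [hY, add_comm]; rfl
  have hsignal : ∀ q : Fin Q, √ρ • (Pi.single q 1 : Fin Q → ℝ) = Pi.single q √ρ := fun q => by
    rw [← Pi.single_smul', smul_eq_mul, mul_one]
  rw [hYZ, hindep.integral_comp_of_map_eq_uniform hXmeas hZmeas hXlaw'
      (F := fun p => ∑ i, (p.1 i - ppmEstimator Q ρ (p.2 + √ρ • p.1) i) ^ 2) (by fun_prop)
      fun q => .of_bound (Measurable.aestronglyMeasurable (by fun_prop)) Q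
        (ae_of_all _ fun z => abs_sum_single_sub_ppmEstimator_sq_le q _),
    hZlaw]
  simp only [hsignal]
  rw [ppm_mmse_eq_one_sub ⟨0, by omega⟩, integral_sum_sq_ppmEstimator_eq_add h10, ← hZlaw,
    integral_map hZmeas.aemeasurable (Measurable.aestronglyMeasurable (by fun_prop))]
  simp only [ppmEstimator_sq_add_mul_sq hρ _ h10]
end

section
/- Let B and K be positive integers and let θ be a real number with 0 ≤ θ < B. Consider the set A ⊆ ℝ^{B×K} of all families ζ = (ζ_{b,j})_{1≤b≤B, 1≤j≤K} such that the number of indices b ∈ {1,…,B} with ζ_{b,j} > 1 for all j ∈ {1,…,K} is strictly greater than θ. Then the infimum of Σ_{b=1}^{B} Σ_{j=1}^{K} ζ_{b,j}² over ζ ∈ A equals K·(⌊θ⌋ + 1). -/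
open Finset

/-- The dominant-outage optimization (lognormal case): over families
`ζ : Fin B × Fin K → ℝ` such that strictly more than `θ` of the `B` rows have all their
entries `> 1`, the infimum of the sum of squares of the entries is `K(⌊θ⌋ + 1)`. -/
theorem outage_infimum_squares (B K : ℕ) (hB : 0 < B) (hK : 0 < K)
    (θ : ℝ) (hθ0 : 0 ≤ θ) (hθB : θ < B) :
    sInf ((fun ζ : Fin B → Fin K → ℝ => ∑ b, ∑ j, (ζ b j) ^ 2) ''
        {ζ | θ < ({b : Fin B | ∀ j, 1 < ζ b j}.ncard : ℝ)}) =
      (K : ℝ) * ((⌊θ⌋ : ℝ) + 1) := by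
  set S := ((fun ζ : Fin B → Fin K → ℝ => ∑ b, ∑ j, (ζ b j) ^ 2) ''
        {ζ | θ < ({b : Fin B | ∀ j, 1 < ζ b j}.ncard : ℝ)}) with hS
  set m : ℕ := ⌊θ⌋.toNat + 1 with hm
  have hfl0 : (0 : ℤ) ≤ ⌊θ⌋ := Int.floor_nonneg.mpr hθ0
  have hmcast : (⌊θ⌋ : ℝ) + 1 = (m : ℝ) := by
    have h1 : ((⌊θ⌋.toNat : ℤ) : ℝ) = (⌊θ⌋ : ℝ) := by
      exact_mod_cast congrArg (fun z : ℤ => (z : ℝ)) (Int.toNat_of_nonneg hfl0)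
    push_cast [hm]
    push_cast at h1
    linarith
  have hmB : m ≤ B := by
    have h1 : ⌊θ⌋ < (B : ℤ) := Int.floor_lt.mpr (by exact_mod_cast hθB)
    omega
  have hmpos : 0 < m := Nat.succ_pos _
  -- lower bound
  have hlb : ∀ x ∈ S, (K : ℝ) * m ≤ x := by
    rintro x ⟨ζ, hζ, rfl⟩
    simp only [Set.mem_setOf_eq] at hζ
    set G := {b : Fin B | ∀ j, 1 < ζ b j} with hG
    have hGfin : G.Finite := Set.toFinite G
    have hmG : m ≤ G.ncard := by
      have : (⌊θ⌋ : ℝ) < (G.ncard : ℝ) := by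
        calc (⌊θ⌋ : ℝ) ≤ θ := Int.floor_le θ
        _ < _ := hζ
      have h2 : ⌊θ⌋ < (G.ncard : ℤ) := by exact_mod_cast this
      omega
    have hsub : hGfin.toFinset ⊆ Finset.univ := Finset.subset_univ _
    calc (K : ℝ) * m ≤ (K : ℝ) * G.ncard := by
          apply mul_le_mul_of_nonneg_left _ (by positivity)
          exact_mod_cast hmG
      _ = ∑ b ∈ hGfin.toFinset, (K : ℝ) := by
          rw [Finset.sum_const, Set.ncard_eq_toFinset_card G hGfin, nsmul_eq_mul, mul_comm]
      _ ≤ ∑ b ∈ hGfin.toFinset, ∑ j, (ζ b j) ^ 2 := by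
          apply Finset.sum_le_sum
          intro b hb
          have hb' : ∀ j, 1 < ζ b j := by
            have := (Set.Finite.mem_toFinset hGfin).mp hb
            exact this
          calc (K : ℝ) = ∑ _j : Fin K, (1 : ℝ) := by simp
            _ ≤ ∑ j, (ζ b j) ^ 2 := by
                apply Finset.sum_le_sum
                intro j _
                nlinarith [hb' j]
      _ ≤ ∑ b, ∑ j, (ζ b j) ^ 2 := by
          apply Finset.sum_le_sum_of_subset_of_nonneg hsub
          intro b _ _
          positivity
  have hbdd : BddBelow S := ⟨_, hlb⟩
  -- construction
  have hmem : ∀ c : ℝ, 1 < c →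
      ((m : ℝ) * (K * c ^ 2)) ∈ S := by
    intro c hc
    refine ⟨fun b j => if (b : ℕ) < m then c else 0, ?_, ?_⟩
    · simp only [Set.mem_setOf_eq]
      have hset : {b : Fin B | ∀ _j : Fin K, 1 < (if (b : ℕ) < m then c else 0)}
          = Set.range (Fin.castLE hmB) := by
        rw [Fin.range_castLE]
        ext b
        simp only [Set.mem_setOf_eq]
        constructor
        · intro h
          by_contra hb
          have := h ⟨0, hK⟩
          simp [hb] at this
          linarith
        · intro h _j
          simp [h, hc]
      have hcard : (Set.range (Fin.castLE hmB)).ncard = m := by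
        rw [← Nat.card_coe_set_eq, Nat.card_range_of_injective (Fin.castLE_injective hmB)]
        simp
      rw [hset, hcard]
      have : θ < (⌊θ⌋ : ℝ) + 1 := Int.lt_floor_add_one θ
      rw [hmcast] at this
      exact this
    · have hinner : ∀ b : Fin B,
          (∑ j : Fin K, (if (b : ℕ) < m then c else 0) ^ 2)
            = if (b : ℕ) < m then (K : ℝ) * c ^ 2 else 0 := by
        intro b
        by_cases hb : (b : ℕ) < m <;> simp [hb, mul_comm]
      simp only [hinner]
      rw [← Finset.sum_filter]
      have hcard : (Finset.univ.filter fun b : Fin B => (b : ℕ) < m).card = m := by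
        have : (Finset.univ.filter fun b : Fin B => (b : ℕ) < m)
            = Finset.map (Fin.castLEEmb hmB) Finset.univ := by
          ext b
          simp only [Finset.mem_filter, Finset.mem_univ, true_and, Finset.mem_map]
          constructor
          · intro h; exact ⟨⟨b, h⟩, by simp [Fin.castLEEmb]⟩
          · rintro ⟨a, -, rfl⟩; exact a.isLt
        rw [this]
        simp
      rw [Finset.sum_const, hcard]
      push_cast
      ring
  have hne : S.Nonempty := ⟨_, hmem 2 one_lt_two⟩
  rw [hmcast]
  apply le_antisymm
  · -- sInf ≤ K m
    apply le_of_forall_pos_le_add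
    intro ε hε
    have hKm : (0 : ℝ) < (K : ℝ) * m := by positivity
    set c : ℝ := Real.sqrt (1 + ε / ((K : ℝ) * m)) with hc
    have hc2 : c ^ 2 = 1 + ε / ((K : ℝ) * m) := by
      rw [hc, Real.sq_sqrt]; positivity
    have hc1 : 1 < c := by
      rw [hc]
      have : (1 : ℝ) < 1 + ε / ((K : ℝ) * m) := by
        have : 0 < ε / ((K : ℝ) * m) := by positivity
        linarith
      nlinarith [Real.sq_sqrt (by positivity : (0:ℝ) ≤ 1 + ε / ((K : ℝ) * m)),
        Real.sqrt_nonneg (1 + ε / ((K : ℝ) * m))]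
    have := csInf_le hbdd (hmem c hc1)
    have hval : (m : ℝ) * ((K : ℝ) * c ^ 2) = (K : ℝ) * m + ε := by
      rw [hc2]
      field_simp
    linarith
  · exact le_csInf hne hlb
end

section
/- Let B and K be positive integers and let θ be a real number with 0 ≤ θ < B. Consider the set A ⊆ ℝ^{B×K} of all families ζ = (ζ_{b,j})_{1≤b≤B, 1≤j≤K} with ζ_{b,j} ≥ 0 for all b, j, such that the number of indices b ∈ {1,…,B} with ζ_{b,j} > 1 for all j ∈ {1,…,K} is strictly greater than θ. Then the infimum of Σ_{b=1}^{B} Σ_{j=1}^{K} ζ_{b,j} over ζ ∈ A equals K·(⌊θ⌋ + 1). -/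
/-!
A row all of whose `|κ|` entries exceed `1` contributes more than `|κ|` to the sum, so a family
with at least `n` such rows has sum at least `|κ| n`. Conversely, putting the value `t > 1` on
`n` rows and `0` elsewhere gives sum `|κ| n t`, which tends to `|κ| n` as `t → 1⁺`. For integer
row counts, "more than `θ`" means "at least `⌊θ⌋ + 1`".
-/

open Finset Filter Topology

section RowsGtOne

variable {ι κ : Type*} [Fintype ι] [Fintype κ]

def rowsGtOne (ζ : ι → κ → ℝ) : Set ι := {b | ∀ j, 1 < ζ b j}

lemma card_mul_ncard_rowsGtOne_le_sum {ζ : ι → κ → ℝ} (hζ : ∀ b j, 0 ≤ ζ b j) :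
    (Fintype.card κ : ℝ) * (rowsGtOne ζ).ncard ≤ ∑ b, ∑ j, ζ b j := by
  classical
  set S := (rowsGtOne ζ).toFinset
  have hrow : ∀ b ∈ S, (Fintype.card κ : ℝ) ≤ ∑ j, ζ b j := fun b hb => by
    simpa using card_nsmul_le_sum univ (ζ b) 1 fun j _ => (Set.mem_toFinset.1 hb j).le
  calc (Fintype.card κ : ℝ) * (rowsGtOne ζ).ncard = S.card • (Fintype.card κ : ℝ) := by
        rw [Set.ncard_eq_toFinset_card', nsmul_eq_mul, mul_comm]
    _ ≤ ∑ b ∈ S, ∑ j, ζ b j := card_nsmul_le_sum _ _ _ hrow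
    _ ≤ ∑ b, ∑ j, ζ b j :=
        sum_le_sum_of_subset_of_nonneg (subset_univ _) fun b _ _ => sum_nonneg fun j _ => hζ b j

lemma exists_subset_rowsGtOne_sum_eq (s : Finset ι) {t : ℝ} (ht : 1 < t) :
    ∃ ζ : ι → κ → ℝ, (∀ b j, 0 ≤ ζ b j) ∧ ↑s ⊆ rowsGtOne ζ ∧
      ∑ b, ∑ j, ζ b j = Fintype.card κ * s.card * t := by
  classical
  refine ⟨fun b _ => if b ∈ s then t else 0, fun b j => ?_, fun b hb j => ?_, ?_⟩
  · dsimp only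
    split_ifs <;> linarith
  · simp only [Finset.mem_coe.1 hb, if_true, ht]
  · simp only [sum_const, card_univ, nsmul_eq_mul, ← mul_sum, sum_ite_mem, univ_inter]
    ring

theorem sInf_sum_of_le_ncard_rowsGtOne {n : ℕ} (hn : n ≤ Fintype.card ι) :
    sInf ((fun ζ : ι → κ → ℝ => ∑ b, ∑ j, ζ b j) ''
        {ζ | (∀ b j, 0 ≤ ζ b j) ∧ n ≤ (rowsGtOne ζ).ncard}) = Fintype.card κ * n := by
  set A := (fun ζ : ι → κ → ℝ => ∑ b, ∑ j, ζ b j) ''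
    {ζ | (∀ b j, 0 ≤ ζ b j) ∧ n ≤ (rowsGtOne ζ).ncard}
  obtain ⟨s, -, hs⟩ := exists_subset_card_eq (s := (univ : Finset ι)) (n := n) (by rwa [card_univ])
  have hlower : ∀ x ∈ A, (Fintype.card κ * n : ℝ) ≤ x := by
    rintro _ ⟨ζ, ⟨hζ, hcard⟩, rfl⟩
    refine le_trans ?_ (card_mul_ncard_rowsGtOne_le_sum hζ)
    gcongr
  have hmem : ∀ t : ℝ, 1 < t → (Fintype.card κ * n : ℝ) * t ∈ A := fun t ht => by
    obtain ⟨ζ, hζ, hsub, hsum⟩ := exists_subset_rowsGtOne_sum_eq (κ := κ) s ht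
    refine ⟨ζ, ⟨hζ, ?_⟩, hsum.trans (by rw [hs])⟩
    simpa only [hs, Set.ncard_coe_finset] using Set.ncard_le_ncard hsub
  apply le_antisymm
  · have hlim : Tendsto (fun t : ℝ => (Fintype.card κ * n : ℝ) * t) (𝓝[>] 1)
        (𝓝 ((Fintype.card κ * n : ℝ) * 1)) :=
      ((continuous_const.mul continuous_id).tendsto 1).mono_left nhdsWithin_le_nhds
    rw [← mul_one (Fintype.card κ * n : ℝ)]
    exact ge_of_tendsto hlim (eventually_nhdsWithin_of_forall fun t ht =>
      csInf_le ⟨_, hlower⟩ (hmem t ht))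
  · exact le_csInf ⟨_, hmem 2 one_lt_two⟩ hlower

end RowsGtOne

theorem outage_infimum_linear_general (B K : ℕ)
    (θ : ℝ) (hθ0 : 0 ≤ θ) (hθB : θ < B) :
    sInf ((fun ζ : Fin B → Fin K → ℝ => ∑ b, ∑ j, ζ b j) ''
        {ζ | (∀ b j, 0 ≤ ζ b j) ∧ θ < ({b : Fin B | ∀ j, 1 < ζ b j}.ncard : ℝ)}) =
      (K : ℝ) * ((⌊θ⌋ : ℝ) + 1) := by
  have hlt_iff : ∀ m : ℕ, θ < m ↔ ⌊θ⌋₊ + 1 ≤ m := fun m => (Nat.floor_lt hθ0).symm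
  have hset : {ζ : Fin B → Fin K → ℝ | (∀ b j, 0 ≤ ζ b j) ∧
      θ < ({b : Fin B | ∀ j, 1 < ζ b j}.ncard : ℝ)} =
      {ζ | (∀ b j, 0 ≤ ζ b j) ∧ ⌊θ⌋₊ + 1 ≤ (rowsGtOne ζ).ncard} := by
    simp only [hlt_iff, rowsGtOne]
  rw [hset, sInf_sum_of_le_ncard_rowsGtOne (by simpa using (hlt_iff B).1 hθB), Fintype.card_fin,
    ← Int.natCast_floor_eq_floor hθ0, Int.cast_natCast, Nat.cast_add_one]

/-- The dominant-outage optimization (exponential and gamma-gamma cases): over families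
`ζ : Fin B × Fin K → ℝ` of nonnegative entries such that strictly more than `θ` of the `B`
rows have all their entries `> 1`, the infimum of the sum of the entries is `K(⌊θ⌋ + 1)`. -/
theorem outage_infimum_linear (B K : ℕ) (hB : 0 < B) (hK : 0 < K)
    (θ : ℝ) (hθ0 : 0 ≤ θ) (hθB : θ < B) :
    sInf ((fun ζ : Fin B → Fin K → ℝ => ∑ b, ∑ j, ζ b j) ''
        {ζ | (∀ b j, 0 ≤ ζ b j) ∧ θ < ({b : Fin B | ∀ j, 1 < ζ b j}.ncard : ℝ)}) =
      (K : ℝ) * ((⌊θ⌋ : ℝ) + 1) :=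
  outage_infimum_linear_general B K θ hθ0 hθB
end

section
/- Let k be a positive integer, μ ∈ ℝ, σ² > 0, and let H_1, …, H_k be i.i.d. lognormal random variables with parameters μ and σ² (i.e. log H_i is Gaussian with mean μ and variance σ²). Let S = Σ_{i=1}^{k} H_i. Then lim_{x→0+} log P(S ≤ x) / (log x)² = −k/(2σ²). -/
open MeasureTheory ProbabilityTheory Real Filter
open scoped ProbabilityTheory ENNReal NNReal

open Set Topology

/-!
As the summands are positive, `S ≤ x` forces every `H i ≤ x`, while `H i ≤ x / k` for every `i`
forces `S ≤ x`; by independence `P(S ≤ x)` lies between `Φ(log x - log k) ^ k` and `Φ(log x) ^ k`,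
where `Φ` is the distribution function of `N(μ, σ²)`. The Gaussian lower tail satisfies
`log Φ(y) / y² → -1 / (2σ²)` as `y → -∞`: from above by the Chernoff bound, from below by the mass
of `[y - 1, y]`, which is at least the density at `y - 1`. The shift by `log k` does not change
this rate.
-/

lemma tendsto_sub_sq_div_div_sq_atBot (a b c : ℝ) :
    Tendsto (fun y : ℝ => (a - (y - b) ^ 2 / c) / y ^ 2) atBot (𝓝 (-c⁻¹)) := by
  have hinv : Tendsto (fun y : ℝ => y⁻¹) atBot (𝓝 0) := tendsto_inv_atBot_zero
  have hlim : Tendsto (fun y : ℝ => a * (y⁻¹) ^ 2 - (1 - b * y⁻¹) ^ 2 * c⁻¹) atBot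
      (𝓝 (a * 0 ^ 2 - (1 - b * 0) ^ 2 * c⁻¹)) :=
    ((hinv.pow 2).const_mul a).sub ((((hinv.const_mul b).const_sub 1).pow 2).mul_const _)
  rw [show a * 0 ^ 2 - (1 - b * 0) ^ 2 * c⁻¹ = -c⁻¹ by ring] at hlim
  refine hlim.congr' ?_
  filter_upwards [eventually_ne_atBot 0] with y hy
  rw [div_eq_mul_inv _ c]
  field_simp

lemma map_exp_real_Iic (ν : Measure ℝ) {x : ℝ} (hx : 0 < x) :
    (ν.map exp).real (Iic x) = ν.real (Iic (log x)) := by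
  rw [map_measureReal_apply measurable_exp measurableSet_Iic]
  congr 1
  ext t
  exact (le_log_iff_exp_le hx).symm

namespace ProbabilityTheory

variable {μ : ℝ} {v : ℝ≥0}

-- Chernoff bound at the optimal parameter `t = (y - μ) / v`.
lemma gaussianReal_real_Iic_le_exp {y : ℝ} (hy : y ≤ μ) :
    (gaussianReal μ v).real (Iic y) ≤ exp (-(y - μ) ^ 2 / (2 * v)) := by
  have h := measure_le_le_exp_cgf (μ := gaussianReal μ v) (X := id) (t := (y - μ) / v) y
    (div_nonpos_of_nonpos_of_nonneg (by linarith) v.2) (integrable_exp_mul_gaussianReal _)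
  rw [cgf_gaussianReal (X := id) Measure.map_id] at h
  refine h.trans_eq (congrArg exp ?_)
  rcases eq_or_ne (v : ℝ) 0 with hv | hv
  · simp [hv]
  · field_simp
    ring

lemma gaussianPDFReal_le_gaussianPDFReal {x y : ℝ} (hxy : x ≤ y) (hy : y ≤ μ) :
    gaussianPDFReal μ v x ≤ gaussianPDFReal μ v y := by
  simp only [gaussianPDFReal_def]
  gcongr _ * exp (-?_ / _)
  nlinarith

lemma log_gaussianPDFReal (hv : v ≠ 0) (x : ℝ) :
    log (gaussianPDFReal μ v x) = -log √(2 * π * v) - (x - μ) ^ 2 / (2 * v) := by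
  rw [gaussianPDFReal_def, log_mul (inv_ne_zero (by positivity)) (exp_pos _).ne', log_inv, log_exp]
  ring

lemma gaussianPDFReal_sub_one_le_gaussianReal_real_Iic (hv : v ≠ 0) {y : ℝ} (hy : y ≤ μ) :
    gaussianPDFReal μ v (y - 1) ≤ (gaussianReal μ v).real (Iic y) := by
  have hint := (integrable_gaussianPDFReal μ v).integrableOn (s := Iic y)
  rw [measureReal_def, gaussianReal_apply_eq_integral μ hv, ENNReal.toReal_ofReal
    (setIntegral_nonneg measurableSet_Iic fun x _ => gaussianPDFReal_nonneg μ v x)]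
  calc gaussianPDFReal μ v (y - 1)
      = gaussianPDFReal μ v (y - 1) * volume.real (Ioc (y - 1) y) := by simp
    _ ≤ ∫ x in Ioc (y - 1) y, gaussianPDFReal μ v x :=
        setIntegral_ge_of_const_le_real measurableSet_Ioc (by simp)
          (fun x hx => gaussianPDFReal_le_gaussianPDFReal hx.1.le (hx.2.trans hy))
          (integrable_gaussianPDFReal μ v).integrableOn
    _ ≤ ∫ x in Iic y, gaussianPDFReal μ v x :=
        setIntegral_mono_set hint (ae_of_all _ (gaussianPDFReal_nonneg μ v))
          Ioc_subset_Iic_self.eventuallyLE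

lemma gaussianReal_real_Iic_pos (hv : v ≠ 0) (y : ℝ) : 0 < (gaussianReal μ v).real (Iic y) :=
  ENNReal.toReal_pos (fun h => by simpa using gaussianReal_absolutelyContinuous' μ hv h)
    (measure_ne_top _ _)

lemma gaussianReal_real_Iic_add (c y : ℝ) :
    (gaussianReal μ v).real (Iic (c + y)) = (gaussianReal (μ - c) v).real (Iic y) := by
  rw [← gaussianReal_map_sub_const, map_measureReal_apply (by fun_prop) measurableSet_Iic]
  congr 1
  ext x
  simp [add_comm c]

theorem tendsto_log_gaussianReal_real_Iic_div_sq (μ : ℝ) (hv : v ≠ 0) :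
    Tendsto (fun y => log ((gaussianReal μ v).real (Iic y)) / y ^ 2) atBot
      (𝓝 (-(2 * v : ℝ)⁻¹)) := by
  refine tendsto_of_tendsto_of_tendsto_of_le_of_le'
    (tendsto_sub_sq_div_div_sq_atBot (-log √(2 * π * v)) (μ + 1) _)
    (tendsto_sub_sq_div_div_sq_atBot 0 μ _) ?_ ?_ <;>
  filter_upwards [eventually_le_atBot μ] with y hy <;>
  refine div_le_div_of_nonneg_right ?_ (sq_nonneg y)
  · rw [show y - (μ + 1) = y - 1 - μ by ring, ← log_gaussianPDFReal hv]
    exact log_le_log (gaussianPDFReal_pos μ v _ hv)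
      (gaussianPDFReal_sub_one_le_gaussianReal_real_Iic hv hy)
  · rw [zero_sub, ← neg_div, ← log_exp (-(y - μ) ^ 2 / (2 * v))]
    exact log_le_log (gaussianReal_real_Iic_pos hv y) (gaussianReal_real_Iic_le_exp hy)

lemma tendsto_log_map_exp_gaussianReal_real_Iic_mul_div_sq (μ : ℝ) (hv : v ≠ 0) {c : ℝ}
    (hc : 0 < c) :
    Tendsto (fun x => log (((gaussianReal μ v).map exp).real (Iic (c * x))) / log x ^ 2)
      (𝓝[>] 0) (𝓝 (-(2 * v : ℝ)⁻¹)) := by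
  refine ((tendsto_log_gaussianReal_real_Iic_div_sq (μ - log c) hv).comp
    tendsto_log_nhdsGT_zero).congr' ?_
  filter_upwards [self_mem_nhdsWithin] with x (hx : 0 < x)
  rw [Function.comp_apply, map_exp_real_Iic _ (mul_pos hc hx), log_mul hc.ne' hx.ne',
    gaussianReal_real_Iic_add]

section SumLowerTail

variable {Ω ι : Type*} [MeasurableSpace Ω] {P : Measure Ω} [Fintype ι] {X : ι → Ω → ℝ}

lemma iIndepFun.measure_sum_le_le_prod (hX : iIndepFun X P) (hnonneg : ∀ i, ∀ᵐ ω ∂P, 0 ≤ X i ω)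
    (x : ℝ) : P {ω | ∑ i, X i ω ≤ x} ≤ ∏ i, P (X i ⁻¹' Iic x) := by
  rw [← hX.meas_iInter fun i => ⟨Iic x, measurableSet_Iic, rfl⟩]
  refine measure_mono_ae ?_
  filter_upwards [ae_all_iff.2 hnonneg] with ω hω hsum
  exact mem_iInter.2 fun j =>
    (Finset.single_le_sum (fun i _ => hω i) (Finset.mem_univ j)).trans hsum

lemma iIndepFun.prod_le_measure_sum_le [Nonempty ι] (hX : iIndepFun X P) (x : ℝ) :
    ∏ i, P (X i ⁻¹' Iic (x / Fintype.card ι)) ≤ P {ω | ∑ i, X i ω ≤ x} := by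
  rw [← hX.meas_iInter fun i => ⟨Iic _, measurableSet_Iic, rfl⟩]
  refine measure_mono fun ω hω => ?_
  calc ∑ i, X i ω ≤ ∑ _i : ι, x / Fintype.card ι :=
        Finset.sum_le_sum fun i _ => mem_iInter.1 hω i
    _ = x := by simp [mul_div_cancel₀ x (Nat.cast_ne_zero.2 Fintype.card_ne_zero)]

theorem tendsto_log_measureReal_sum_le_div_sq [IsFiniteMeasure P] [Nonempty ι] {ν : Measure ℝ}
    (hmeas : ∀ i, Measurable (X i)) (hlaw : ∀ i, P.map (X i) = ν) (hX : iIndepFun X P)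
    (hν_nonneg : ∀ᵐ y ∂ν, 0 ≤ y) (hν_pos : ∀ x > 0, 0 < ν.real (Iic x)) {L : ℝ}
    (htail : ∀ c > 0, Tendsto (fun x => log (ν.real (Iic (c * x))) / log x ^ 2) (𝓝[>] 0) (𝓝 L)) :
    Tendsto (fun x => log (P.real {ω | ∑ i, X i ω ≤ x}) / log x ^ 2) (𝓝[>] 0)
      (𝓝 (Fintype.card ι * L)) := by
  have hprod : ∀ t, ∏ i, P (X i ⁻¹' Iic t) = ν (Iic t) ^ Fintype.card ι := fun t => by
    simp_rw [← Measure.map_apply (hmeas _) measurableSet_Iic, hlaw, Finset.prod_const,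
      Finset.card_univ]
  set n := Fintype.card ι
  have hn : (0 : ℝ) < n := Nat.cast_pos.2 Fintype.card_pos
  have hnonneg : ∀ i, ∀ᵐ ω ∂P, 0 ≤ X i ω := fun i =>
    ae_of_ae_map (hmeas i).aemeasurable ((hlaw i).symm ▸ hν_nonneg)
  have hlower : ∀ x > 0, ν.real (Iic ((n : ℝ)⁻¹ * x)) ^ n ≤ P.real {ω | ∑ i, X i ω ≤ x} := by
    intro x _
    simp only [measureReal_def, ← ENNReal.toReal_pow, ← hprod, inv_mul_eq_div]
    exact ENNReal.toReal_mono (measure_ne_top _ _) (hX.prod_le_measure_sum_le x)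
  have hupper : ∀ x, P.real {ω | ∑ i, X i ω ≤ x} ≤ ν.real (Iic (1 * x)) ^ n := by
    intro x
    simp only [measureReal_def, ← ENNReal.toReal_pow, ← hprod, one_mul]
    exact ENNReal.toReal_mono (by simp [ENNReal.prod_ne_top, measure_ne_top])
      (hX.measure_sum_le_le_prod hnonneg x)
  refine tendsto_of_tendsto_of_tendsto_of_le_of_le'
    ((htail n⁻¹ (inv_pos.2 hn)).const_mul (n : ℝ)) ((htail 1 one_pos).const_mul (n : ℝ)) ?_ ?_ <;>
  filter_upwards [self_mem_nhdsWithin] with x (hx : 0 < x) <;>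
  rw [mul_div_assoc', ← log_pow] <;>
  refine div_le_div_of_nonneg_right ?_ (sq_nonneg _)
  · exact log_le_log (pow_pos (hν_pos _ (by positivity)) n) (hlower x hx)
  · exact log_le_log ((pow_pos (hν_pos _ (by positivity)) n).trans_le (hlower x hx)) (hupper x)

end SumLowerTail

end ProbabilityTheory

/-- Lower-tail behavior of a sum `S = ∑ H_i` of `k` i.i.d. lognormal random variables
with parameters `μ, σ²`: `log P(S ≤ x)/(log x)² → −k/(2σ²)` as `x → 0⁺`. -/
theorem lognormal_sum_lower_tail {Ω : Type*} [MeasureSpace Ω]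
    [IsProbabilityMeasure (ℙ : Measure Ω)]
    (k : ℕ) (hk : 0 < k) (μ : ℝ) (σ2 : ℝ≥0) (hσ2 : 0 < σ2)
    (H : Fin k → Ω → ℝ) (hmeas : ∀ i, Measurable (H i))
    (hlaw : ∀ i, Measure.map (H i) ℙ = (gaussianReal μ σ2).map Real.exp)
    (hindep : iIndepFun H ℙ) :
    Filter.Tendsto
      (fun x : ℝ => Real.log ((ℙ {ω | ∑ i, H i ω ≤ x}).toReal) / (Real.log x) ^ 2)
      (nhdsWithin 0 (Set.Ioi 0))
      (nhds (-((k : ℝ) / (2 * (σ2 : ℝ))))) := by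
  have hv : σ2 ≠ 0 := hσ2.ne'
  have : Nonempty (Fin k) := ⟨⟨0, hk⟩⟩
  have hnonneg : ∀ᵐ y ∂(gaussianReal μ σ2).map exp, 0 ≤ y :=
    (ae_map_iff measurable_exp.aemeasurable measurableSet_Ici).2 <|
      ae_of_all _ fun t => (exp_pos t).le
  have hlim := tendsto_log_measureReal_sum_le_div_sq hmeas hlaw hindep hnonneg
    (fun x hx => map_exp_real_Iic _ hx ▸ gaussianReal_real_Iic_pos hv _)
    (fun c hc => tendsto_log_map_exp_gaussianReal_real_Iic_mul_div_sq μ hv hc)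
  have hrate : (Fintype.card (Fin k) : ℝ) * -(2 * σ2 : ℝ)⁻¹ = -(k / (2 * σ2)) := by
    rw [Fintype.card_fin]
    ring
  exact hrate ▸ hlim
end

section
/- Let α, β > 0 with α ≠ β, and let X ~ Gamma(shape α, rate α) and Y ~ Gamma(shape β, rate β) be independent. Then lim_{x→0+} log P(X·Y ≤ x) / log x = min(α, β). -/
open MeasureTheory ProbabilityTheory Real Filter Set
open scoped ProbabilityTheory ENNReal Topology

/-!
For `X ~ Gamma(a, a)` and `s < a` the negative moment `E[X ^ (-s)] = a ^ s Γ(a - s) / Γ(a)` is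
finite, so Markov's inequality for `(XY) ^ (-s)` gives `P(XY ≤ x) ≤ C x ^ s` for every
`s < min a b`. Conversely, the gamma density is of order `u ^ (a - 1)` near `0`, so the rectangle
`{0 < X ≤ x, 0 < Y ≤ 1}` (or `{0 < X ≤ 1, 0 < Y ≤ x}`) has probability at least `c x ^ a`
(or `c x ^ b`). Dividing the logarithms of these bounds by `log x → -∞` squeezes the ratio to
`min a b`.
-/

lemma log_div_log_le_of_le {x y z : ℝ} (hx0 : 0 < x) (hx1 : x < 1) (hy : 0 < y) (hyz : y ≤ z) :
    log z / log x ≤ log y / log x :=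
  div_le_div_of_nonpos_of_le (log_neg hx0 hx1).le (log_le_log hy hyz)

lemma tendsto_log_mul_rpow_div_log {c : ℝ} (hc : c ≠ 0) (m : ℝ) :
    Tendsto (fun x => log (c * x ^ m) / log x) (𝓝[>] 0) (𝓝 m) := by
  have hlim : Tendsto (fun x => m + log c / log x) (𝓝[>] 0) (𝓝 m) := by
    simpa using tendsto_const_nhds.add (tendsto_const_nhds.div_atBot tendsto_log_nhdsGT_zero)
  refine hlim.congr' ?_
  filter_upwards [Ioo_mem_nhdsGT (zero_lt_one' ℝ)] with x ⟨hx0, hx1⟩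
  have hlogx : log x ≠ 0 := (log_neg hx0 hx1).ne
  rw [log_mul hc (rpow_pos_of_pos hx0 m).ne', log_rpow hx0]
  field_simp
  ring

theorem tendsto_log_div_log_of_rpow_bounds {f : ℝ → ℝ} {m : ℝ}
    (hlower : ∃ c > 0, ∀ᶠ x in 𝓝[>] 0, c * x ^ m ≤ f x)
    (hupper : ∀ᶠ s in 𝓝[<] m, ∃ C > 0, ∀ᶠ x in 𝓝[>] 0, f x ≤ C * x ^ s) :
    Tendsto (fun x => log (f x) / log x) (𝓝[>] 0) (𝓝 m) := by
  obtain ⟨c, hc, hcf⟩ := hlower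
  have hunit : ∀ᶠ x in 𝓝[>] (0 : ℝ), 0 < x ∧ x < 1 := Ioo_mem_nhdsGT (zero_lt_one' ℝ)
  refine tendsto_order.2 ⟨fun s hs => ?_, fun s hs => ?_⟩
  · obtain ⟨s', ⟨C, hC, hfC⟩, hss', -⟩ := (hupper.and (Ioo_mem_nhdsLT hs)).exists
    filter_upwards [(tendsto_log_mul_rpow_div_log hC.ne' _).eventually_const_lt hss', hunit, hcf,
      hfC] with x hlt ⟨hx0, hx1⟩ hcx hfx
    have hfpos : 0 < f x := (by positivity : 0 < c * x ^ m).trans_le hcx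
    exact hlt.trans_le (log_div_log_le_of_le hx0 hx1 hfpos hfx)
  · filter_upwards [(tendsto_log_mul_rpow_div_log hc.ne' m).eventually_lt_const hs, hunit, hcf]
      with x hlt ⟨hx0, hx1⟩ hcx
    exact (log_div_log_le_of_le hx0 hx1 (by positivity) hcx).trans_lt hlt

@[fun_prop]
lemma measurable_gammaPDF (a r : ℝ) : Measurable (gammaPDF a r) :=
  (measurable_gammaPDFReal a r).ennreal_ofReal

lemma lintegral_Ioc_rpow_sub_one {a t : ℝ} (ha : 0 < a) (ht : 0 ≤ t) :
    ∫⁻ u in Ioc 0 t, ENNReal.ofReal (u ^ (a - 1)) = ENNReal.ofReal (t ^ a / a) := by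
  have hint : IntegrableOn (fun u : ℝ => u ^ (a - 1)) (Ioc 0 t) :=
    (intervalIntegrable_iff_integrableOn_Ioc_of_le ht).1
      (intervalIntegral.intervalIntegrable_rpow' (by linarith))
  rw [← ofReal_integral_eq_lintegral_ofReal hint, ← intervalIntegral.integral_of_le ht,
    integral_rpow (Or.inl (by linarith)), sub_add_cancel, zero_rpow ha.ne', sub_zero]
  filter_upwards [ae_restrict_mem measurableSet_Ioc] with u hu
  exact rpow_nonneg hu.1.le _

lemma ofReal_mul_rpow_le_gammaMeasure_Ioc {a r x : ℝ} (ha : 0 < a) (hr : 0 ≤ r) (hx0 : 0 < x)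
    (hx1 : x ≤ 1) :
    ENNReal.ofReal (exp (-r) * (r ^ a / Gamma a) / a * x ^ a) ≤ gammaMeasure a r (Ioc 0 x) := by
  rw [mul_comm_div, gammaMeasure, withDensity_apply _ measurableSet_Ioc,
    ENNReal.ofReal_mul (by positivity), ← lintegral_Ioc_rpow_sub_one ha hx0.le,
    ← lintegral_const_mul' _ _ ENNReal.ofReal_ne_top]
  refine setLIntegral_mono (by fun_prop) fun u ⟨hu0, hux⟩ => ?_
  rw [gammaPDF_of_nonneg hu0.le, ← ENNReal.ofReal_mul (by positivity)]
  refine ENNReal.ofReal_le_ofReal ?_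
  have hexp : exp (-r) ≤ exp (-(r * u)) :=
    exp_le_exp.2 (neg_le_neg (mul_le_of_le_one_right hr (hux.trans hx1)))
  calc exp (-r) * (r ^ a / Gamma a) * u ^ (a - 1) = r ^ a / Gamma a * u ^ (a - 1) * exp (-r) := by
        ring
    _ ≤ r ^ a / Gamma a * u ^ (a - 1) * exp (-(r * u)) := by gcongr

lemma gammaMeasure_ae_pos (a r : ℝ) : ∀ᵐ v ∂gammaMeasure a r, 0 < v := by
  rw [gammaMeasure, ae_withDensity_iff (measurable_gammaPDF a r)]
  filter_upwards [compl_mem_ae_iff.2 (measure_singleton (0 : ℝ))] with v (hv : v ≠ 0) hpdf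
  exact hv.symm.lt_of_le (not_lt.1 fun hneg => hpdf (gammaPDF_of_neg hneg))

noncomputable def gammaNegMoment (a r s : ℝ) : ℝ := r ^ s * Gamma (a - s) / Gamma a

lemma gammaNegMoment_pos {a r s : ℝ} (ha : 0 < a) (hr : 0 < r) (hs : s < a) :
    0 < gammaNegMoment a r s := by
  have := Gamma_pos_of_pos ha
  have := Gamma_pos_of_pos (sub_pos.2 hs)
  unfold gammaNegMoment
  positivity

lemma gammaPDF_mul_rpow_neg {a r s v : ℝ} (ha : 0 < a) (hr : 0 < r) (hs : s < a) (hv : 0 < v) :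
    gammaPDF a r v * ENNReal.ofReal (v ^ (-s))
      = ENNReal.ofReal (gammaNegMoment a r s) * gammaPDF (a - s) r v := by
  have := Gamma_pos_of_pos ha
  have := Gamma_pos_of_pos (sub_pos.2 hs)
  rw [gammaPDF_of_nonneg hv.le, gammaPDF_of_nonneg hv.le, ← ENNReal.ofReal_mul (by positivity),
    ← ENNReal.ofReal_mul (gammaNegMoment_pos ha hr hs).le]
  congr 1
  have hpow_r : r ^ a = r ^ s * r ^ (a - s) := by rw [← rpow_add hr]; ring_nf
  have hpow_v : v ^ (a - 1) = v ^ (a - s - 1) * v ^ s := by rw [← rpow_add hv]; ring_nf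
  rw [gammaNegMoment, hpow_r, hpow_v, rpow_neg hv.le]
  field_simp

lemma lintegral_rpow_neg_gammaMeasure {a r s : ℝ} (ha : 0 < a) (hr : 0 < r) (hs : s < a) :
    ∫⁻ v, ENNReal.ofReal (v ^ (-s)) ∂gammaMeasure a r
      = ENNReal.ofReal (gammaNegMoment a r s) := by
  rw [gammaMeasure, lintegral_withDensity_eq_lintegral_mul _
    (measurable_gammaPDF a r) (by fun_prop)]
  calc ∫⁻ v, (gammaPDF a r * fun v => ENNReal.ofReal (v ^ (-s))) v
      = ∫⁻ v, ENNReal.ofReal (gammaNegMoment a r s) * gammaPDF (a - s) r v := by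
        refine lintegral_congr_ae ?_
        filter_upwards [compl_mem_ae_iff.2 (measure_singleton (0 : ℝ))] with v (hv : v ≠ 0)
        rcases hv.lt_or_gt with hneg | hpos
        · simp [gammaPDF_of_neg hneg]
        · exact gammaPDF_mul_rpow_neg ha hr hs hpos
    _ = ENNReal.ofReal (gammaNegMoment a r s) := by
        rw [lintegral_const_mul _ (measurable_gammaPDF _ _),
          lintegral_gammaPDF_eq_one (sub_pos.2 hs) hr, mul_one]

lemma measurableSet_mul_le (x : ℝ) : MeasurableSet {p : ℝ × ℝ | p.1 * p.2 ≤ x} :=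
  measurableSet_le (measurable_fst.mul measurable_snd) measurable_const

lemma measure_Ioc_mul_measure_Ioc_le_prod {μ ν : Measure ℝ} [SFinite ν] (y z : ℝ) :
    μ (Ioc 0 y) * ν (Ioc 0 z) ≤ μ.prod ν {p : ℝ × ℝ | p.1 * p.2 ≤ y * z} := by
  rw [← Measure.prod_prod]
  refine measure_mono ?_
  rintro ⟨u, v⟩ ⟨⟨hu0, huy⟩, hv0, hvz⟩
  exact mul_le_mul huy hvz hv0.le (hu0.le.trans huy)

lemma prod_mul_le_le_lintegral_rpow_neg {μ ν : Measure ℝ} [SFinite ν]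
    (hμ : ∀ᵐ u ∂μ, 0 < u) (hν : ∀ᵐ v ∂ν, 0 < v) {s x : ℝ} (hs : 0 ≤ s) (hx : 0 < x) :
    μ.prod ν {p : ℝ × ℝ | p.1 * p.2 ≤ x}
      ≤ ENNReal.ofReal (x ^ s) * ((∫⁻ u, ENNReal.ofReal (u ^ (-s)) ∂μ)
          * ∫⁻ v, ENNReal.ofReal (v ^ (-s)) ∂ν) := by
  rw [← lintegral_prod_mul (by fun_prop) (by fun_prop),
    ← lintegral_const_mul' _ _ ENNReal.ofReal_ne_top,
    ← lintegral_indicator_one (measurableSet_mul_le x)]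
  refine lintegral_mono_ae ?_
  filter_upwards [Measure.quasiMeasurePreserving_fst.ae hμ,
    Measure.quasiMeasurePreserving_snd.ae hν] with ⟨u, v⟩ (hu : 0 < u) (hv : 0 < v)
  by_cases huv : (u, v) ∈ {p : ℝ × ℝ | p.1 * p.2 ≤ x}
  · rw [indicator_of_mem huv, Pi.one_apply,
      ← ENNReal.ofReal_mul (rpow_nonneg hu.le _), ← ENNReal.ofReal_mul (rpow_nonneg hx.le _),
      ENNReal.one_le_ofReal, rpow_neg hu.le, rpow_neg hv.le, ← mul_inv, ← mul_rpow hu.le hv.le,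
      ← div_eq_mul_inv, ← div_rpow hx.le (by positivity)]
    exact one_le_rpow ((one_le_div (by positivity)).2 huv) hs
  · rw [indicator_of_notMem huv]
    exact zero_le

lemma gammaGamma_lower_bound {a b : ℝ} (ha : 0 < a) (hb : 0 < b) :
    ∃ c > 0, ∀ᶠ x in 𝓝[>] 0,
      c * x ^ min a b
        ≤ ((gammaMeasure a a).prod (gammaMeasure b b) {p | p.1 * p.2 ≤ x}).toReal := by
  have := isProbabilityMeasure_gammaMeasure ha ha
  have := isProbabilityMeasure_gammaMeasure hb hb
  have := Gamma_pos_of_pos ha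
  have := Gamma_pos_of_pos hb
  set ka := exp (-a) * (a ^ a / Gamma a) / a
  set kb := exp (-b) * (b ^ b / Gamma b) / b
  refine ⟨ka * kb, by positivity, ?_⟩
  filter_upwards [Ioo_mem_nhdsGT (zero_lt_one' ℝ)] with x ⟨hx0, hx1⟩
  rw [← ENNReal.ofReal_le_iff_le_toReal (measure_ne_top _ _)]
  rcases min_choice a b with hmin | hmin <;> rw [hmin]
  · calc ENNReal.ofReal (ka * kb * x ^ a)
        = ENNReal.ofReal (ka * x ^ a) * ENNReal.ofReal (kb * 1 ^ b) := by
          rw [← ENNReal.ofReal_mul (by positivity), one_rpow]; ring_nf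
      _ ≤ gammaMeasure a a (Ioc 0 x) * gammaMeasure b b (Ioc 0 1) :=
          mul_le_mul' (ofReal_mul_rpow_le_gammaMeasure_Ioc ha ha.le hx0 hx1.le)
            (ofReal_mul_rpow_le_gammaMeasure_Ioc hb hb.le one_pos le_rfl)
      _ ≤ _ := by simpa using measure_Ioc_mul_measure_Ioc_le_prod x 1
  · calc ENNReal.ofReal (ka * kb * x ^ b)
        = ENNReal.ofReal (ka * 1 ^ a) * ENNReal.ofReal (kb * x ^ b) := by
          rw [← ENNReal.ofReal_mul (by positivity), one_rpow]; ring_nf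
      _ ≤ gammaMeasure a a (Ioc 0 1) * gammaMeasure b b (Ioc 0 x) :=
          mul_le_mul' (ofReal_mul_rpow_le_gammaMeasure_Ioc ha ha.le one_pos le_rfl)
            (ofReal_mul_rpow_le_gammaMeasure_Ioc hb hb.le hx0 hx1.le)
      _ ≤ _ := by simpa using measure_Ioc_mul_measure_Ioc_le_prod 1 x

lemma gammaGamma_upper_bound {a b : ℝ} (ha : 0 < a) (hb : 0 < b) :
    ∀ᶠ s in 𝓝[<] min a b, ∃ C > 0, ∀ᶠ x in 𝓝[>] 0,
      ((gammaMeasure a a).prod (gammaMeasure b b) {p | p.1 * p.2 ≤ x}).toReal ≤ C * x ^ s := by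
  have := isProbabilityMeasure_gammaMeasure hb hb
  filter_upwards [Ioo_mem_nhdsLT (lt_min ha hb)] with s ⟨hs0, hsab⟩
  have hsa : s < a := hsab.trans_le (min_le_left a b)
  have hsb : s < b := hsab.trans_le (min_le_right a b)
  have hMa := gammaNegMoment_pos ha ha hsa
  have hMb := gammaNegMoment_pos hb hb hsb
  refine ⟨gammaNegMoment a a s * gammaNegMoment b b s, by positivity, ?_⟩
  filter_upwards [self_mem_nhdsWithin] with x (hx : 0 < x)
  refine ENNReal.toReal_le_of_le_ofReal (by positivity) ?_
  calc _ ≤ _ := prod_mul_le_le_lintegral_rpow_neg (gammaMeasure_ae_pos a a)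
          (gammaMeasure_ae_pos b b) hs0.le hx
    _ = _ := by
      rw [lintegral_rpow_neg_gammaMeasure ha ha hsa, lintegral_rpow_neg_gammaMeasure hb hb hsb,
        ← ENNReal.ofReal_mul hMa.le, ← ENNReal.ofReal_mul (by positivity), mul_comm]

theorem gammaGamma_lower_tail_general {Ω : Type*} [MeasureSpace Ω]
    [IsProbabilityMeasure (ℙ : Measure Ω)]
    (a b : ℝ) (ha : 0 < a) (hb : 0 < b)
    (X Y : Ω → ℝ) (hXmeas : Measurable X) (hYmeas : Measurable Y)
    (hXlaw : Measure.map X ℙ = gammaMeasure a a)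
    (hYlaw : Measure.map Y ℙ = gammaMeasure b b)
    (hindep : IndepFun X Y ℙ) :
    Filter.Tendsto
      (fun x : ℝ => Real.log ((ℙ {ω | X ω * Y ω ≤ x}).toReal) / Real.log x)
      (nhdsWithin 0 (Set.Ioi 0))
      (nhds (min a b)) := by
  have hjoint :
      Measure.map (fun ω => (X ω, Y ω)) ℙ = (gammaMeasure a a).prod (gammaMeasure b b) := by
    rw [← hXlaw, ← hYlaw]
    exact (indepFun_iff_map_prod_eq_prod_map_map hXmeas.aemeasurable hYmeas.aemeasurable).1 hindep
  have hprob (x : ℝ) :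
      ℙ {ω | X ω * Y ω ≤ x}
        = (gammaMeasure a a).prod (gammaMeasure b b) {p | p.1 * p.2 ≤ x} := by
    rw [← hjoint, Measure.map_apply (hXmeas.prodMk hYmeas) (measurableSet_mul_le x)]
    rfl
  simp only [hprob]
  exact tendsto_log_div_log_of_rpow_bounds (gammaGamma_lower_bound ha hb)
    (gammaGamma_upper_bound ha hb)

/-- Lower-tail polynomial order of the gamma-gamma coefficient `X·Y` (with
`X ~ Gamma(α,α)`, `Y ~ Gamma(β,β)` independent, `α ≠ β`):
`log P(XY ≤ x)/log x → min(α,β)` as `x → 0⁺`. -/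
theorem gammaGamma_lower_tail {Ω : Type*} [MeasureSpace Ω]
    [IsProbabilityMeasure (ℙ : Measure Ω)]
    (a b : ℝ) (ha : 0 < a) (hb : 0 < b) (hab : a ≠ b)
    (X Y : Ω → ℝ) (hXmeas : Measurable X) (hYmeas : Measurable Y)
    (hXlaw : Measure.map X ℙ = gammaMeasure a a)
    (hYlaw : Measure.map Y ℙ = gammaMeasure b b)
    (hindep : IndepFun X Y ℙ) :
    Filter.Tendsto
      (fun x : ℝ => Real.log ((ℙ {ω | X ω * Y ω ≤ x}).toReal) / Real.log x)
      (nhdsWithin 0 (Set.Ioi 0))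
      (nhds (min a b)) :=
  gammaGamma_lower_tail_general a b ha hb X Y hXmeas hYmeas hXlaw hYlaw hindep
end

section
/- Let α > β > 0, and let f be the density of the product X·Y of independent random variables X ~ Gamma(shape α, rate α) and Y ~ Gamma(shape β, rate β), i.e. f(h) = ∫_0^∞ x^{−1}·f_X(x)·f_Y(h/x) dx for h > 0, where f_X(x) = α^α x^{α−1} e^{−αx}/Γ(α) and f_Y(y) = β^β y^{β−1} e^{−βy}/Γ(β). Then lim_{h→0+} f(h)/h^{β−1} = (αβ)^β · Γ(α−β) / (Γ(α)·Γ(β)). -/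
/-!
Writing `(h / x) ^ (β - 1) = h ^ (β - 1) x ^ (1 - β)`, the integrand is `h ^ (β - 1)` times
`x ^ (α - β - 1) e^{-αx} e^{-βh/x}` up to the normalising constants. As `h → 0⁺` the last factor
increases to `1`, so by dominated convergence (dominated by the `h = 0` integrand, integrable
exactly because `α > β`) the normalised density tends to the Gamma integral
`∫₀^∞ x ^ (α - β - 1) e^{-αx} dx = α ^ (β - α) Γ(α - β)`.
-/

open MeasureTheory Real Filter Set Topology

lemma integrableOn_rpow_mul_exp_neg_mul_Ioi {s r : ℝ} (hs : 0 < s) (hr : 0 < r) :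
    IntegrableOn (fun x : ℝ => x ^ (s - 1) * exp (-(r * x))) (Ioi 0) :=
  .of_integral_ne_zero <| by rw [integral_rpow_mul_exp_neg_mul_Ioi hs hr]; positivity

theorem tendsto_setIntegral_mul_exp_neg_mul_div {f : ℝ → ℝ} (hf : IntegrableOn f (Ioi 0))
    {c : ℝ} (hc : 0 ≤ c) :
    Tendsto (fun h => ∫ x in Ioi 0, f x * exp (-(c * (h / x)))) (𝓝[>] 0)
      (𝓝 (∫ x in Ioi 0, f x)) := by
  refine tendsto_integral_filter_of_dominated_convergence (fun x => ‖f x‖)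
    (.of_forall fun h => hf.aestronglyMeasurable.mul (by fun_prop)) ?_ hf.norm ?_
  · filter_upwards [self_mem_nhdsWithin] with h (hh : 0 < h)
    refine (ae_restrict_iff' measurableSet_Ioi).2 (.of_forall fun x (hx : 0 < x) => ?_)
    rw [norm_mul, norm_of_nonneg (exp_pos _).le]
    exact mul_le_of_le_one_right (norm_nonneg _)
      (exp_le_one_iff.2 (neg_nonpos.2 (by positivity)))
  · refine .of_forall fun x => ?_
    have hexp : Tendsto (fun h => exp (-(c * (h / x)))) (𝓝[>] 0) (𝓝 1) := by
      have hcont : Continuous fun h => exp (-(c * (h / x))) := by fun_prop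
      simpa using (hcont.tendsto 0).mono_left nhdsWithin_le_nhds
    simpa using hexp.const_mul (f x)

lemma gammaGamma_integrand_eq {a b h x : ℝ} (hh : 0 < h) (hx : 0 < x) :
    x⁻¹ * (a ^ a * x ^ (a - 1) * exp (-(a * x)) / Gamma a) *
        (b ^ b * (h / x) ^ (b - 1) * exp (-(b * (h / x))) / Gamma b) =
      h ^ (b - 1) * (a ^ a * b ^ b / (Gamma a * Gamma b) *
        (x ^ (a - b - 1) * exp (-(a * x)) * exp (-(b * (h / x))))) := by
  have hxpow : x ^ (a - b - 1) = x⁻¹ * x ^ (a - 1) / x ^ (b - 1) := by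
    rw [← rpow_neg_one, ← rpow_add hx, ← rpow_sub hx]
    ring_nf
  rw [div_rpow hh.le hx.le, hxpow]
  ring

lemma gammaGamma_limit_eq {a b : ℝ} (ha : 0 < a) (hb : 0 < b) :
    a ^ a * b ^ b / (Gamma a * Gamma b) * ((1 / a) ^ (a - b) * Gamma (a - b)) =
      (a * b) ^ b * Gamma (a - b) / (Gamma a * Gamma b) := by
  have hpow : a ^ a * (1 / a) ^ (a - b) = a ^ b := by
    rw [one_div, inv_rpow ha.le, ← rpow_neg ha.le, ← rpow_add ha]
    ring_nf
  rw [mul_rpow ha.le hb.le, ← hpow]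
  ring

/-- Small-argument asymptotics of the gamma-gamma density (for `α > β > 0`), given by the
multiplicative convolution `f(h) = ∫_0^∞ x⁻¹ f_X(x) f_Y(h/x) dx` of the densities of
`Gamma(α,α)` and `Gamma(β,β)`: `f(h)/h^{β−1} → (αβ)^β Γ(α−β)/(Γ(α)Γ(β))` as `h → 0⁺`. -/
theorem gammaGamma_density_small_argument (a b : ℝ) (hb : 0 < b) (hba : b < a) :
    Filter.Tendsto
      (fun h : ℝ =>
        (∫ x in Set.Ioi (0 : ℝ),
          x⁻¹ * (a ^ a * x ^ (a - 1) * Real.exp (-(a * x)) / Real.Gamma a) *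
            (b ^ b * (h / x) ^ (b - 1) * Real.exp (-(b * (h / x))) / Real.Gamma b)) /
          h ^ (b - 1))
      (nhdsWithin 0 (Set.Ioi 0))
      (nhds ((a * b) ^ b * Real.Gamma (a - b) / (Real.Gamma a * Real.Gamma b))) := by
  have ha : 0 < a := hb.trans hba
  have hab : 0 < a - b := sub_pos.2 hba
  have hlim := (tendsto_setIntegral_mul_exp_neg_mul_div
    (integrableOn_rpow_mul_exp_neg_mul_Ioi hab ha) hb.le).const_mul
    (a ^ a * b ^ b / (Gamma a * Gamma b))
  rw [integral_rpow_mul_exp_neg_mul_Ioi hab ha, gammaGamma_limit_eq ha hb] at hlim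
  refine hlim.congr' ?_
  filter_upwards [self_mem_nhdsWithin] with h (hh : 0 < h)
  rw [setIntegral_congr_fun measurableSet_Ioi fun x (hx : 0 < x) => gammaGamma_integrand_eq hh hx,
    integral_const_mul, integral_const_mul, mul_div_cancel_left₀ _ (rpow_pos_of_pos hh _).ne']
end
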